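/- If tubal matrices A ∈ ℝ^{m×m×l} and B ∈ ℝ^{n×n×l} are invertible under the t-product, then A ⊗_t B is invertible and (A ⊗_t B)^{-1} = A^{-1} ⊗_t B^{-1}. -/
import Mathlib


open scoped Matrix Kronecker BigOperators
open MeasureTheory
open scoped ProbabilityTheory

/-- The t-product of two tubal matrices (third-order tensors given by their
frontal slices): `(A*B)_k = ∑_{k'} A_{k-k'} B_{k'}` (circular convolution of slices),
equivalently `A*B = fold(bcirc(A) · unfold(B))`. -/
def tProd {α β γ : Type*} [Fintype β] {l : ℕ}
    (A : Fin l → Matrix α β ℝ) (B : Fin l → Matrix β γ ℝ) :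
    Fin l → Matrix α γ ℝ :=
  fun k => ∑ k' : Fin l, A (k - k') * B k'

/-- The block-circulant matrix of a tubal matrix: the `(a,b)` block is `A_{a-b mod l}`. -/
def bcirc {α β : Type*} {l : ℕ} (A : Fin l → Matrix α β ℝ) :
    Matrix (α × Fin l) (β × Fin l) ℝ :=
  Matrix.of fun p q => A (p.2 - q.2) p.1 q.1

/-- Squared Frobenius norm of a tubal matrix (third-order tensor). -/
def frobSq {α β : Type*} [Fintype α] [Fintype β] {l : ℕ}
    (A : Fin l → Matrix α β ℝ) : ℝ :=
  ∑ k, ∑ i, ∑ j, (A k i j) ^ 2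

/-- Squared Frobenius norm of a real matrix. -/
def matFrobSq {α β : Type*} [Fintype α] [Fintype β] (M : Matrix α β ℝ) : ℝ :=
  ∑ i, ∑ j, (M i j) ^ 2

/-- Tensor transpose under the t-product: transpose each frontal slice and reverse
the order of slices 2 through l, i.e. `(Aᵀ)_k = (A_{-k})ᵀ`. -/
def ttr {α β : Type*} {l : ℕ} (A : Fin l → Matrix α β ℝ) :
    Fin l → Matrix β α ℝ :=
  fun k => (A (-k))ᵀ

/-- Slice transpose: transpose each frontal slice (no reversal). -/
def sliceT {α β : Type*} {l : ℕ} (A : Fin l → Matrix α β ℝ) :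
    Fin l → Matrix β α ℝ :=
  fun k => (A k)ᵀ

/-- Reverse: reverse the order of frontal slices 2 through l. -/
def trev {α β : Type*} {l : ℕ} (A : Fin l → Matrix α β ℝ) :
    Fin l → Matrix α β ℝ :=
  fun k => A (-k)

/-- t-Kronecker product of tubal matrices: `(A ⊗_t B)_k = ∑_{k'} A_{k-k'} ⊗ B_{k'}`,
the block tubal matrix whose `(i,j)` block is `A_{(i,j,:)} * B`. -/
def tkron {α β γ δ : Type*} {l : ℕ}
    (A : Fin l → Matrix α β ℝ) (B : Fin l → Matrix γ δ ℝ) :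
    Fin l → Matrix (α × γ) (β × δ) ℝ :=
  fun k => ∑ k' : Fin l, (A (k - k')) ⊗ₖ (B k')

/-- The identity tubal matrix: first frontal slice is the identity, others zero. -/
def tId (α : Type*) [DecidableEq α] [Fintype α] (l : ℕ) [NeZero l] :
    Fin l → Matrix α α ℝ :=
  fun k => if k = 0 then (1 : Matrix α α ℝ) else 0

/-- t-vectorization: stack the lateral slices of a tubal matrix vertically. -/
def vecT {α β : Type*} {l : ℕ} (B : Fin l → Matrix α β ℝ) :
    Fin l → Matrix (β × α) (Fin 1) ℝ :=
  fun k => Matrix.of fun p _ => B k p.2 p.1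

/-- Discrete Fourier transform along the third dimension:
`Â_k = ∑_j exp(-2πi·jk/l) A_j`. -/
noncomputable def dft {α β : Type*} {l : ℕ} (A : Fin l → Matrix α β ℝ) :
    Fin l → Matrix α β ℂ :=
  fun k => ∑ j : Fin l,
    Complex.exp (-(2 * (Real.pi : ℂ) * Complex.I * (j.1 : ℂ) * (k.1 : ℂ)) / (l : ℂ)) •
      (A j).map Complex.ofReal

/-- Squared Frobenius norm of a complex matrix. -/
def matFrobSqC {α β : Type*} [Fintype α] [Fintype β] (M : Matrix α β ℂ) : ℝ :=
  ∑ i, ∑ j, Complex.normSq (M i j)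

lemma sum_kron {α β γ δ ι : Type*} (s : Finset ι)
    (f : ι → Matrix α β ℝ) (M : Matrix γ δ ℝ) :
    (∑ i ∈ s, f i) ⊗ₖ M = ∑ i ∈ s, (f i) ⊗ₖ M := by
  ext ⟨a, c⟩ ⟨b, d⟩
  simp [Matrix.kroneckerMap_apply, Matrix.sum_apply, Finset.sum_mul]

lemma kron_sum {α β γ δ ι : Type*} (s : Finset ι)
    (M : Matrix α β ℝ) (f : ι → Matrix γ δ ℝ) :
    M ⊗ₖ (∑ i ∈ s, f i) = ∑ i ∈ s, M ⊗ₖ (f i) := by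
  ext ⟨a, c⟩ ⟨b, d⟩
  simp [Matrix.kroneckerMap_apply, Matrix.sum_apply, Finset.mul_sum]

lemma tProd_tkron {α β γ δ ε ζ : Type*} [Fintype β] [Fintype ε] {l : ℕ} [NeZero l]
    (A : Fin l → Matrix α β ℝ) (C : Fin l → Matrix β γ ℝ)
    (B : Fin l → Matrix δ ε ℝ) (D : Fin l → Matrix ε ζ ℝ) :
    tProd (tkron A B) (tkron C D) = tkron (tProd A C) (tProd B D) := by
  funext k
  simp only [tProd, tkron, Matrix.sum_mul, Matrix.mul_sum,
    Matrix.mul_kronecker_mul, sum_kron, kron_sum]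
  rw [← Finset.sum_product']
  conv_rhs => rw [← Finset.sum_product']
  rw [← Finset.sum_product']
  conv_rhs => rw [← Finset.sum_product']
  refine Fintype.sum_equiv
    ⟨fun p => ((p.2 + p.1.2, p.1.2), p.1.1 - p.1.2),
     fun q => ((q.2 + q.1.2, q.1.2), q.1.1 - q.1.2), ?_, ?_⟩ _ _ ?_
  · rintro ⟨⟨x, y⟩, z⟩
    simp only [Prod.mk.injEq]
    exact ⟨⟨by abel, trivial⟩, by abel⟩
  · rintro ⟨⟨s, v⟩, w⟩
    simp only [Prod.mk.injEq]
    exact ⟨⟨by abel, trivial⟩, by abel⟩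
  · rintro ⟨⟨x, y⟩, z⟩
    have h1 : k - (z + y) - (x - y) = k - x - z := by abel
    have h2 : z + y - y = z := by abel
    simp only [Equiv.coe_fn_mk, h1, h2]

lemma tkron_tId {m n l : ℕ} [NeZero l] :
    tkron (tId (Fin m) l) (tId (Fin n) l) = tId (Fin m × Fin n) l := by
  funext k
  simp only [tkron, tId]
  rw [Finset.sum_eq_single 0]
  · simp only [sub_zero, if_pos rfl]
    split
    · exact Matrix.one_kronecker_one
    · exact Matrix.zero_kronecker _
  · intro b _ hb
    rw [if_neg hb, Matrix.kronecker_zero]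
  · intro h; exact absurd (Finset.mem_univ _) h


theorem tkron_inv {m n l : ℕ} [NeZero l]
    (A Ai : Fin l → Matrix (Fin m) (Fin m) ℝ)
    (B Bi : Fin l → Matrix (Fin n) (Fin n) ℝ)
    (hA₁ : tProd A Ai = tId (Fin m) l) (hA₂ : tProd Ai A = tId (Fin m) l)
    (hB₁ : tProd B Bi = tId (Fin n) l) (hB₂ : tProd Bi B = tId (Fin n) l) :
    tProd (tkron A B) (tkron Ai Bi) = tId (Fin m × Fin n) l ∧
      tProd (tkron Ai Bi) (tkron A B) = tId (Fin m × Fin n) l := by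
  constructor
  · rw [tProd_tkron, hA₁, hB₁, tkron_tId]
  · rw [tProd_tkron, hA₂, hB₂, tkron_tId]
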